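/- Let K be a field, L a Lie algebra over K, and a₁, …, a_k ∈ L. Then the elements Z_Γ(f), as (Γ, f) ranges over the posetted binary trees ℬ(1 ≤ 2 ≤ ⋯ ≤ k) over the k-element chain (a leaf labelled i being evaluated at a_i), span, as a K-vector space, the Lie subalgebra of L generated by a₁, …, a_k. -/

import Mathlib

/-- A (planar) binary rooted tree with leaves labelled by elements of `A`.
`node l r` has left subtree `l` and right subtree `r`. -/
inductive LTree (A : Type) : Type
  | leaf (a : A) : LTree A
  | node (l r : LTree A) : LTree A

namespace LTree

variable {A : Type}

/-- The list of leaf labels, from left to right. -/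
def leafList : LTree A → List A
  | leaf a => [a]
  | node l r => leafList l ++ leafList r

/-- The number of leaves. -/
def numLeaves (t : LTree A) : ℕ := (leafList t).length

/-- The label of the rightmost leaf, i.e. of `m(root)`. -/
def rml : LTree A → A
  | leaf a => a
  | node _ r => rml r

/-- The length `d(v)` of the rightmost path from the root `v` to `m(v)`. -/
def rdepth : LTree A → ℕ
  | leaf _ => 0
  | node _ r => rdepth r + 1

/-- Monotonicity of the leaf labelling `f : (L(Γ), ⪯) → A`:  for every subroot `v`
and every leaf `u → v` one has `f u ≤ f (m v)`.  (The subroots of `node l r` are the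
root together with the subroots of `l` and the subroots of `r` other than the root of
`r`; the condition at the root of `r` is implied by the one at the root, since
`m(root) = m(root of r)`.) -/
def Mono [Preorder A] : LTree A → Prop
  | leaf _ => True
  | node l r => (∀ x ∈ leafList l ++ leafList r, x ≤ rml r) ∧ Mono l ∧ Mono r

mutual
  /-- The coefficient `b_{(Γ,f)} = ∏_{v ∈ R(Γ)} bn (d v) / t v` attached to a posetted
  tree, for a sequence `bn` of scalars. -/
  def coeff {K : Type} [Field K] [DecidableEq A] (bn : ℕ → K) : LTree A → K
    | leaf _ => 1
    | node l r =>
        (bn (rdepth r + 1) / (((leafList l ++ leafList r).count (rml r) : ℕ) : K))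
          * coeff bn l * coeffAux bn r
  /-- Product of `bn (d v) / t v` over the subroots of the tree other than its root. -/
  def coeffAux {K : Type} [Field K] [DecidableEq A] (bn : ℕ → K) : LTree A → K
    | leaf _ => 1
    | node l r => coeff bn l * coeffAux bn r
end

/-- The evaluation `Z_Γ(f)` of a leaf-labelled binary tree in a Lie algebra: take
the bracket at every internal vertex. -/
def evalT {L : Type} [LieRing L] (g : A → L) : LTree A → L
  | leaf a => g a
  | node l r => ⁅evalT g l, evalT g r⁆

end LTree

/-- `bseq n = B_n / n!`, where `B_n` is the `n`-th Bernoulli number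
(convention `B₁ = -1/2`). -/
noncomputable def bseq (n : ℕ) : ℚ := bernoulli n / n.factorial

section BCH

variable {L : Type} [LieRing L] [LieAlgebra ℚ L]

/-- `adn x n = ad(x)^n`. -/
def adn (x : L) (n : ℕ) : L → L := (fun y => ⁅x, y⁆)^[n]

/-- The summand `ad(a)^{p₁}ad(b)^{q₁}⋯ad(a)^{p_n}ad(b)^{q_n−1} b` of Dynkin's formula
(reading `⋯ad(a)^{p_n−1} a` when `q_n = 0`). -/
def dynkinWord (a b : L) : List (ℕ × ℕ) → L
  | [] => 0
  | [(p, q)] => if q = 0 then adn a (p - 1) a else adn a p (adn b (q - 1) b)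
  | (p, q) :: x :: l => adn a p (adn b q (dynkinWord a b (x :: l)))

/-- The coefficient `((-1)^{n-1}/n) ⬝ (1/(p₁!q₁!⋯p_n!q_n!))` of Dynkin's formula. -/
noncomputable def dynkinCoeff (pl : List (ℕ × ℕ)) : ℚ :=
  ((-1 : ℚ) ^ (pl.length - 1) / (pl.length : ℚ)) *
    ((pl.map fun pq => ((pq.1.factorial * pq.2.factorial : ℕ) : ℚ)).prod)⁻¹

/-- The Baker–Campbell–Hausdorff product, defined by Dynkin's formula; on a nilpotent
Lie algebra all but finitely many summands vanish. -/
noncomputable def bch (a b : L) : L :=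
  ∑ᶠ pl ∈ {pl : List (ℕ × ℕ) | pl ≠ [] ∧ ∀ pq ∈ pl, 0 < pq.1 + pq.2},
    dynkinCoeff pl • dynkinWord a b pl

end BCH


open LTree

section PosettedAux

variable {K : Type} [Field K] {L : Type} [LieRing L] [LieAlgebra K L] {k : ℕ}

/-- Right-normed word evaluation. -/
def wEval (a : Fin k → L) (l : List (Fin k)) (j : Fin k) : L :=
  l.foldr (fun i x => ⁅a i, x⁆) (a j)

/-- Right comb tree. -/
def comb (l : List (Fin k)) (j : Fin k) : LTree (Fin k) :=
  l.foldr (fun i t => .node (.leaf i) t) (.leaf j)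

lemma comb_nil (j : Fin k) : comb ([] : List (Fin k)) j = .leaf j := rfl
lemma comb_cons (i : Fin k) (l : List (Fin k)) (j : Fin k) :
    comb (i :: l) j = .node (.leaf i) (comb l j) := rfl

lemma comb_rml (l : List (Fin k)) (j : Fin k) : (comb l j).rml = j := by
  induction l with
  | nil => rfl
  | cons i l ih => rw [comb_cons, LTree.rml]; exact ih

lemma comb_leafList (l : List (Fin k)) (j : Fin k) :
    (comb l j).leafList = l ++ [j] := by
  induction l with
  | nil => rfl
  | cons i l ih => rw [comb_cons]; simp [LTree.leafList, ih]

lemma comb_mono (l : List (Fin k)) (j : Fin k) (h : ∀ i ∈ l, i ≤ j) :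
    (comb l j).Mono := by
  induction l with
  | nil => trivial
  | cons i l ih =>
    rw [comb_cons]
    refine ⟨?_, trivial, ih fun x hx => h x (List.mem_cons_of_mem _ hx)⟩
    intro x hx
    rw [comb_rml]
    simp [LTree.leafList, comb_leafList] at hx
    rcases hx with h1 | h2 | h3
    · exact h1 ▸ h i List.mem_cons_self
    · exact h x (List.mem_cons_of_mem _ h2)
    · exact le_of_eq h3

lemma comb_eval (a : Fin k → L) (l : List (Fin k)) (j : Fin k) :
    LTree.evalT a (comb l j) = wEval a l j := by
  induction l with
  | nil => rfl
  | cons i l ih => rw [comb_cons]; show ⁅a i, _⁆ = _; rw [ih]; rfl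

/-- The span of words ending in `j` with all letters `≤ j`. -/
def II (K : Type) [Field K] (a : Fin k → L) [LieAlgebra K L] (j : Fin k) : Submodule K L :=
  Submodule.span K {x | ∃ l : List (Fin k), (∀ i ∈ l, i ≤ j) ∧ wEval a l j = x}

/-- The span of all bounded words. -/
def TT (K : Type) [Field K] (a : Fin k → L) [LieAlgebra K L] : Submodule K L :=
  Submodule.span K {x | ∃ (l : List (Fin k)) (j : Fin k), (∀ i ∈ l, i ≤ j) ∧ wEval a l j = x}

lemma II_le_TT (a : Fin k → L) (j : Fin k) : II K a j ≤ TT K a :=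
  Submodule.span_mono fun x ⟨l, hl, hx⟩ => ⟨l, j, hl, hx⟩

lemma ad_gen_mem_II (a : Fin k → L) (j t : Fin k) (ht : t ≤ j) {v : L}
    (hv : v ∈ II K a j) : ⁅a t, v⁆ ∈ II K a j := by
  induction hv using Submodule.span_induction with
  | mem x hx =>
    obtain ⟨l, hl, rfl⟩ := hx
    exact Submodule.subset_span ⟨t :: l, by
      intro i hi
      rcases List.mem_cons.mp hi with h | h
      exacts [h ▸ ht, hl i h], rfl⟩
  | zero => rw [lie_zero]; exact zero_mem _
  | add x y hx hy ihx ihy => rw [lie_add]; exact add_mem ihx ihy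
  | smul c x hx ihx => rw [lie_smul]; exact Submodule.smul_mem _ c ihx

lemma ad_mem_II (a : Fin k → L) (j : Fin k) {x v : L}
    (hx : x ∈ LieSubalgebra.lieSpan K L (a '' Set.Iic j)) (hv : v ∈ II K a j) :
    ⁅x, v⁆ ∈ II K a j := by
  let A : LieSubalgebra K L :=
    { carrier := {x : L | ∀ v ∈ II K a j, ⁅x, v⁆ ∈ II K a j}
      add_mem' := fun hx hy v hv => by
        rw [add_lie]; exact add_mem (hx v hv) (hy v hv)
      zero_mem' := fun v hv => by rw [zero_lie]; exact zero_mem _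
      smul_mem' := fun c x hx v hv => by
        rw [smul_lie]; exact Submodule.smul_mem _ c (hx v hv)
      lie_mem' := fun {x y} hx hy v hv => by
        rw [lie_lie]; exact sub_mem (hx _ (hy v hv)) (hy _ (hx v hv)) }
  have : x ∈ A := by
    refine LieSubalgebra.lieSpan_le.mpr ?_ hx
    rintro _ ⟨t, ht, rfl⟩
    exact fun v hv => ad_gen_mem_II a j t ht hv
  exact this v hv

lemma wEval_mem_lieSpan (a : Fin k → L) (l : List (Fin k)) (j j' : Fin k)
    (hl : ∀ i ∈ l, i ≤ j') (hj : j ≤ j') :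
    wEval a l j ∈ LieSubalgebra.lieSpan K L (a '' Set.Iic j') := by
  induction l with
  | nil => exact LieSubalgebra.subset_lieSpan ⟨j, hj, rfl⟩
  | cons i l ih =>
    exact LieSubalgebra.lie_mem _
      (LieSubalgebra.subset_lieSpan ⟨i, hl i List.mem_cons_self, rfl⟩)
      (ih fun x hx => hl x (List.mem_cons_of_mem _ hx))

lemma TT_lie_closed (a : Fin k → L) {x y : L} (hx : x ∈ TT K a) (hy : y ∈ TT K a) :
    ⁅x, y⁆ ∈ TT K a := by
  induction hx using Submodule.span_induction with
  | mem u hu =>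
    obtain ⟨l, j, hl, rfl⟩ := hu
    induction hy using Submodule.span_induction with
    | mem v hv =>
      obtain ⟨m, j', hm, rfl⟩ := hv
      rcases le_total j j' with h | h
      · exact II_le_TT a j' (ad_mem_II a j' (wEval_mem_lieSpan a l j j' (fun i hi => le_trans (hl i hi) h) h)
          (Submodule.subset_span ⟨m, hm, rfl⟩))
      · rw [← lie_skew]
        exact neg_mem (II_le_TT a j (ad_mem_II a j
          (wEval_mem_lieSpan a m j' j (fun i hi => le_trans (hm i hi) h) h)
          (Submodule.subset_span ⟨l, hl, rfl⟩)))
    | zero => rw [lie_zero]; exact zero_mem _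
    | add v w hv hw ihv ihw => rw [lie_add]; exact add_mem ihv ihw
    | smul c v hv ihv => rw [lie_smul]; exact Submodule.smul_mem _ c ihv
  | zero => rw [zero_lie]; exact zero_mem _
  | add u w hu hw ihu ihw => rw [add_lie]; exact add_mem ihu ihw
  | smul c u hu ihu => rw [smul_lie]; exact Submodule.smul_mem _ c ihu

lemma evalT_mem_lieSpan (a : Fin k → L) (t : LTree (Fin k)) :
    LTree.evalT a t ∈ LieSubalgebra.lieSpan K L (Set.range a) := by
  induction t with
  | leaf i => exact LieSubalgebra.subset_lieSpan ⟨i, rfl⟩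
  | node l r ihl ihr => exact LieSubalgebra.lie_mem _ ihl ihr

end PosettedAux

/-- **Theorem.** Let `K` be a field, `L` a Lie algebra over `K` and `a₁, …, a_k ∈ L`
(here `a : Fin k → L`).  The elements `Z_Γ(f)`, as `(Γ, f)` ranges over the posetted
binary trees over the `k`-element chain (= `Fin k`), a leaf labelled `i` being evaluated
at `a i`, span, as a `K`-vector space, the Lie subalgebra of `L` generated by the `a i`. -/
theorem span_evalT_posetted_trees_eq_lieSpan
    (K : Type) [Field K] (L : Type) [LieRing L] [LieAlgebra K L]
    (k : ℕ) (a : Fin k → L) :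
    Submodule.span K
        {x : L | ∃ t : LTree (Fin k), LTree.Mono t ∧ LTree.evalT a t = x} =
      (LieSubalgebra.lieSpan K L (Set.range a)).toSubmodule := by
  apply le_antisymm
  · refine Submodule.span_le.mpr ?_
    rintro x ⟨t, _, rfl⟩
    exact evalT_mem_lieSpan a t
  · have h1 : TT K a ≤ Submodule.span K
        {x : L | ∃ t : LTree (Fin k), LTree.Mono t ∧ LTree.evalT a t = x} := by
      refine Submodule.span_le.mpr ?_
      rintro x ⟨l, j, hl, rfl⟩
      exact Submodule.subset_span ⟨comb l j, comb_mono l j hl, comb_eval a l j⟩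
    refine le_trans ?_ h1
    intro x hx
    let Tsub : LieSubalgebra K L :=
      { toSubmodule := TT K a
        lie_mem' := fun {x y} hx hy => TT_lie_closed a hx hy }
    have : LieSubalgebra.lieSpan K L (Set.range a) ≤ Tsub := by
      refine LieSubalgebra.lieSpan_le.mpr ?_
      rintro _ ⟨i, rfl⟩
      exact Submodule.subset_span ⟨[], i, by simp, rfl⟩
    exact this hx
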